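/- Let A = ({a,b}, Q, δ) be a completely reachable semi-automaton with n states where a has rank n-1 and b induces an n-cycle on Q. If there is a state q ∈ Q such that δ(q, b^{m+1} a) = δ(q, a b^m) for all 0 ≤ m ≤ ⌊n/2⌋ - 1, then the state complexity of the set of synchronizing words of A equals 2^n - n. -/

import Mathlib

open Finset

universe u v

variable {Q : Type u} {A : Type v}

/-- Extended transition function on words (lists of letters). -/
def dw (δ : Q → A → Q) (q : Q) (w : List A) : Q := w.foldl δ q

/-- A subset `S` of the state set is reachable if it is the image of the
full state set under some word. -/
def reach [Fintype Q] [DecidableEq Q] (δ : Q → A → Q) (S : Finset Q) : Prop :=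
  ∃ w : List A, Finset.univ.image (fun q => dw δ q w) = S

/-- Rank of a word: cardinality of the image of the state set under it. -/
def rkw [Fintype Q] [DecidableEq Q] (δ : Q → A → Q) (w : List A) : ℕ :=
  (Finset.univ.image (fun q => dw δ q w)).card

/-- Rank of a letter. -/
def rkl [Fintype Q] [DecidableEq Q] (δ : Q → A → Q) (a : A) : ℕ :=
  (Finset.univ.image (fun q => δ q a)).card

/-- A map is a cyclic permutation with a single orbit. -/
def isCyclicPerm (f : Q → Q) : Prop :=
  Function.Bijective f ∧ ∀ p q : Q, ∃ k : ℕ, f^[k] p = q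

/-- Two subsets of states are distinguishable in the power automaton:
some word maps exactly one of them to a singleton. -/
def distinguishable [DecidableEq Q] (δ : Q → A → Q) (S T : Finset Q) : Prop :=
  ∃ u : List A,
    Xor' ((S.image (fun q => dw δ q u)).card = 1)
         ((T.image (fun q => dw δ q u)).card = 1)

/-- The set of synchronizing words. -/
def Syn [Fintype Q] [DecidableEq Q] (δ : Q → A → Q) : Set (List A) :=
  {w | (Finset.univ.image (fun q => dw δ q w)).card = 1}

/-- The Nerode right-congruence of a language. -/
def nerode (L : Set (List A)) : Setoid (List A) where
  r u v := ∀ x : List A, u ++ x ∈ L ↔ v ++ x ∈ L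
  iseqv := ⟨fun _ _ => Iff.rfl, fun h x => (h x).symm, fun h1 h2 x => (h1 x).trans (h2 x)⟩

/-- State complexity of a language: number of Nerode classes. -/
noncomputable def sc (L : Set (List A)) : ℕ := Nat.card (Quotient (nerode L))

/-- Complete reachability. -/
def complReach [Fintype Q] [DecidableEq Q] (δ : Q → A → Q) : Prop :=
  ∀ S : Finset Q, S.Nonempty → ∃ w : List A, Finset.univ.image (fun q => dw δ q w) = S

/-- The permutation group generated by the permutational letters. -/
def permGroup [Fintype Q] [DecidableEq Q] (δ : Q → A → Q) : Subgroup (Equiv.Perm Q) :=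
  Subgroup.closure {π : Equiv.Perm Q | ∃ a : A, ∀ q : Q, π q = δ q a}

/-!
Under complete reachability every nonempty subset of states is reached, and all singletons are
Nerode-equivalent, so it suffices to distinguish two distinct subsets `S`, `T` that are not both
singletons; say `t ∈ T \ S` and `#T ≥ 2`. Since every letter has rank at least `n - 1`, prepending
letters to a word synchronizing to `t` enlarges the fibre over `t` one state at a time, so some
word `v` sends every state but one, `z`, to `t`. Preceding `v` by the power of the `n`-cycle `b`
that moves `t` to `z` gives a word sending every state other than `t` to `t`, and `t` elsewhere:
it collapses `S` but not `T`.
-/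

theorem dw_append (δ : Q → A → Q) (q : Q) (u v : List A) :
    dw δ q (u ++ v) = dw δ (dw δ q u) v :=
  List.foldl_append

theorem dw_replicate (δ : Q → A → Q) (a : A) (q : Q) (k : ℕ) :
    dw δ q (List.replicate k a) = (δ · a)^[k] q := by
  induction k generalizing q with
  | zero => rfl
  | succ k ih => exact ih (δ q a)

theorem image_dw_append [DecidableEq Q] (δ : Q → A → Q) (S : Finset Q) (u v : List A) :
    S.image (dw δ · (u ++ v)) = (S.image (dw δ · u)).image (dw δ · v) := by
  simp only [image_image, Function.comp_def, dw_append]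

theorem not_distinguishable_iff [DecidableEq Q] {δ : Q → A → Q} {S T : Finset Q} :
    ¬ distinguishable δ S T ↔
      ∀ u, (#(S.image (dw δ · u)) = 1 ↔ #(T.image (dw δ · u)) = 1) := by
  simp only [distinguishable, not_exists]
  exact forall_congr' fun _ => not_xor _ _

theorem card_filter_card_ne_one [Fintype Q] :
    #(univ.filter fun S : Finset Q => #S ≠ 1) = 2 ^ Fintype.card Q - Fintype.card Q := by
  have hsingletons : #(univ.filter fun S : Finset Q => #S = 1) = Fintype.card Q := by
    rw [← powerset_univ, ← powersetCard_eq_filter, card_powersetCard, card_univ,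
      Nat.choose_one_right]
  have := card_filter_add_card_filter_not (s := (univ : Finset (Finset Q))) (#· = 1)
  rw [card_univ, Fintype.card_finset] at this
  simp only [ne_eq]
  omega

section SynchronizingWords

variable [Fintype Q] [DecidableEq Q]

theorem card_add_card_image_univ_le (f : Q → Q) (s : Finset Q) :
    #s + #(univ.image f) ≤ #(s.image f) + Fintype.card Q := by
  have hcover : univ.image f ⊆ s.image f ∪ sᶜ.image f := by
    rw [← image_union, union_compl]
  have := (card_le_card hcover).trans (card_union_le _ _)
  have := card_image_le (s := sᶜ) (f := f)
  have := card_compl s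
  have := card_le_univ s
  omega

theorem card_preimage_le_card_add_one {f : Q → Q}
    (hf : Fintype.card Q ≤ #(univ.image f) + 1) (T : Finset Q) :
    #(univ.filter (f · ∈ T)) ≤ #T + 1 := by
  have hsub : (univ.filter (f · ∈ T)).image f ⊆ T := by
    simp [subset_iff]
  have := card_add_card_image_univ_le f (univ.filter (f · ∈ T))
  have := card_le_card hsub
  omega

variable {δ : Q → A → Q}

/-- Fibres of `dw δ · w` grow by at most one state per letter prepended to `w`,
so every size between `1` and the size of some fibre is attained. -/
theorem exists_card_fiber_eq (hrank : ∀ a, Fintype.card Q ≤ rkl δ a + 1) (y : Q)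
    (u : List A) {m : ℕ} (hm : 1 ≤ m) (hmu : m ≤ #(univ.filter (dw δ · u = y))) :
    ∃ v, #(univ.filter (dw δ · v = y)) = m := by
  induction u with
  | nil =>
    refine ⟨[], ?_⟩
    have : univ.filter (dw δ · [] = y) = {y} := by
      ext x; simp only [mem_filter, mem_univ, true_and, mem_singleton]; rfl
    rw [this, card_singleton] at hmu ⊢
    omega
  | cons a u ih =>
    by_cases hm' : m ≤ #(univ.filter (dw δ · u = y))
    · exact ih hm'
    · refine ⟨a :: u, le_antisymm ?_ hmu⟩
      have := card_preimage_le_card_add_one (hrank a) (univ.filter (dw δ · u = y))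
      simp only [mem_filter, mem_univ, true_and] at this
      exact this.trans (by omega)

theorem exists_word_isolating (hcr : complReach δ) (hrank : ∀ a, Fintype.card Q ≤ rkl δ a + 1)
    {b : A} (hb : isCyclicPerm (δ · b)) (hcard : 2 ≤ Fintype.card Q) (y : Q) :
    ∃ w, dw δ y w ≠ y ∧ ∀ x, x ≠ y → dw δ x w = y := by
  obtain ⟨u, hu⟩ := hcr {y} (singleton_nonempty y)
  have hfu : univ.filter (dw δ · u = y) = univ := by
    ext x
    simpa [← mem_singleton, ← hu] using mem_image_of_mem (dw δ · u) (mem_univ x)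
  obtain ⟨v, hv⟩ := exists_card_fiber_eq hrank y u (m := Fintype.card Q - 1) (by omega)
    (by rw [hfu, card_univ]; omega)
  obtain ⟨z, hz⟩ : ∃ z, (univ.filter (dw δ · v = y))ᶜ = {z} :=
    card_eq_one.mp (by rw [card_compl, hv]; omega)
  have hzv : ∀ x, dw δ x v = y ↔ x ≠ z := fun x => by
    simpa using (congrArg (x ∈ ·) hz).to_iff.not
  obtain ⟨k, hk⟩ := hb.2 y z
  refine ⟨List.replicate k b ++ v, ?_, fun x hx => ?_⟩ <;> rw [dw_append, dw_replicate]
  · rw [hk, ne_eq, hzv, not_not]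
  · rw [hzv, ← hk]
    exact (hb.1.iterate k).injective.ne hx

theorem distinguishable_of_mem_of_notMem (hcr : complReach δ)
    (hrank : ∀ a, Fintype.card Q ≤ rkl δ a + 1) {b : A} (hb : isCyclicPerm (δ · b))
    {S T : Finset Q} (hS : S.Nonempty) (hT : 2 ≤ #T) {t : Q} (htT : t ∈ T) (htS : t ∉ S) :
    distinguishable δ S T := by
  obtain ⟨t', ht'T, ht't⟩ := exists_mem_ne (by omega : 1 < #T) t
  obtain ⟨w, hwt, hw⟩ := exists_word_isolating hcr hrank hb (hT.trans (card_le_univ T)) t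
  refine ⟨w, Or.inl ⟨card_eq_one.mpr ⟨t, ?_⟩, ?_⟩⟩
  · refine eq_singleton_iff_nonempty_unique_mem.mpr ⟨hS.image _, ?_⟩
    simp only [mem_image, forall_exists_index, and_imp, forall_apply_eq_imp_iff₂]
    exact fun s hs => hw s (ne_of_mem_of_not_mem hs htS)
  · have : 1 < #(T.image (dw δ · w)) := one_lt_card.mpr ⟨_, mem_image_of_mem _ ht'T,
      _, mem_image_of_mem _ htT, by rw [hw t' ht't]; exact hwt.symm⟩
    omega

/-- Reached subsets with all singletons merged into one class, represented by `∅`: these are the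
states of the minimal automaton of `Syn δ`. -/
def collapseSingletons (S : Finset Q) : Finset Q := if #S = 1 then ∅ else S

theorem not_distinguishable_iff_collapseSingletons_eq (hcr : complReach δ)
    (hrank : ∀ a, Fintype.card Q ≤ rkl δ a + 1) {b : A} (hb : isCyclicPerm (δ · b))
    {S T : Finset Q} (hS : S.Nonempty) (hT : T.Nonempty) :
    ¬ distinguishable δ S T ↔ collapseSingletons S = collapseSingletons T := by
  rw [not_distinguishable_iff]
  constructor
  · intro h
    have hnil : #S = 1 ↔ #T = 1 := by simpa [dw] using h []
    by_cases hS1 : #S = 1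
    · simp [collapseSingletons, hS1, hnil.mp hS1]
    rw [collapseSingletons, collapseSingletons, if_neg hS1, if_neg (mt hnil.mpr hS1)]
    have hS2 : 2 ≤ #S := by have := hS.card_pos; omega
    have hT2 : 2 ≤ #T := by have := hT.card_pos; have := mt hnil.mpr hS1; omega
    by_contra hne
    by_cases hTS : T ⊆ S
    · obtain ⟨s, hsS, hsT⟩ := not_subset.mp fun hST => hne (hST.antisymm hTS)
      obtain ⟨u, hu⟩ := distinguishable_of_mem_of_notMem hcr hrank hb hT hS2 hsS hsT
      exact (not_xor _ _).mpr (h u).symm hu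
    · obtain ⟨t, htT, htS⟩ := not_subset.mp hTS
      obtain ⟨u, hu⟩ := distinguishable_of_mem_of_notMem hcr hrank hb hS hT2 htT htS
      exact (not_xor _ _).mpr (h u) hu
  · intro h u
    unfold collapseSingletons at h
    split_ifs at h with hS1 hT1
    · obtain ⟨s, rfl⟩ := card_eq_one.mp hS1
      obtain ⟨t, rfl⟩ := card_eq_one.mp hT1
      simp
    · exact absurd h.symm hT.ne_empty
    · exact absurd h hS.ne_empty
    · rw [h]

theorem nerode_Syn_iff (u v : List A) :
    (nerode (Syn δ)).r u v ↔
      ¬ distinguishable δ (univ.image (dw δ · u)) (univ.image (dw δ · v)) := by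
  simp only [not_distinguishable_iff, ← image_dw_append]
  rfl

theorem nerode_Syn_eq_ker (hcr : complReach δ) (hrank : ∀ a, Fintype.card Q ≤ rkl δ a + 1)
    {b : A} (hb : isCyclicPerm (δ · b)) :
    nerode (Syn δ) = Setoid.ker fun u => collapseSingletons (univ.image (dw δ · u)) := by
  refine Setoid.ext fun u v => ?_
  rw [nerode_Syn_iff, Setoid.ker_def]
  rcases isEmpty_or_nonempty Q with hQ | hQ
  · simp [univ_eq_empty, not_distinguishable_iff]
  · exact not_distinguishable_iff_collapseSingletons_eq hcr hrank hb
      (univ_nonempty.image _) (univ_nonempty.image _)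

theorem range_collapseSingletons_image (hcr : complReach δ) :
    Set.range (fun u => collapseSingletons (univ.image (dw δ · u))) = {S | #S ≠ 1} := by
  ext S
  constructor
  · rintro ⟨u, rfl⟩
    simp only [collapseSingletons, Set.mem_ofPred_eq]
    split_ifs <;> simp_all
  · intro hS
    rcases S.eq_empty_or_nonempty with rfl | hne
    · rcases isEmpty_or_nonempty Q with hQ | ⟨⟨q⟩⟩
      · exact ⟨[], by simp [univ_eq_empty, collapseSingletons]⟩
      · obtain ⟨u, hu⟩ := hcr {q} (singleton_nonempty q)
        exact ⟨u, by simp [collapseSingletons, hu]⟩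
    · obtain ⟨u, hu⟩ := hcr S hne
      exact ⟨u, by simp [collapseSingletons, hu, Set.mem_ofPred_eq.mp hS]⟩

theorem sc_Syn_eq (hcr : complReach δ) (hrank : ∀ a, Fintype.card Q ≤ rkl δ a + 1)
    {b : A} (hb : isCyclicPerm (δ · b)) :
    sc (Syn δ) = 2 ^ Fintype.card Q - Fintype.card Q := by
  rw [sc, nerode_Syn_eq_ker hcr hrank hb, Nat.card_congr (Setoid.quotientKerEquivRange _),
    range_collapseSingletons_image hcr, ← card_filter_card_ne_one]
  simp [Nat.card_eq_fintype_card, Fintype.card_subtype]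

end SynchronizingWords

theorem sc_syn_max_of_half_shift_general [Fintype Q] [DecidableEq Q]
    (δ : Q → Bool → Q) (n : ℕ) (hn : Fintype.card Q = n)
    (hcr : complReach δ)
    (ha : rkl δ false = n - 1)
    (hb : isCyclicPerm (fun q => δ q true))
    (q : Q) :
    sc (Syn δ) = 2 ^ n - n := by
  have hrank : ∀ a, Fintype.card Q ≤ rkl δ a + 1 := by
    rintro (_ | _)
    · omega
    · rw [rkl, image_univ_of_surjective hb.1.surjective, card_univ]
      omega
  rw [← hn]
  exact sc_Syn_eq hcr hrank hb

theorem sc_syn_max_of_half_shift [Fintype Q] [DecidableEq Q]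
    (δ : Q → Bool → Q) (n : ℕ) (hn : Fintype.card Q = n)
    (hcr : complReach δ)
    (ha : rkl δ false = n - 1)
    (hb : isCyclicPerm (fun q => δ q true))
    (q : Q)
    (h : ∀ m : ℕ, m ≤ n / 2 - 1 →
      dw δ q (List.replicate (m + 1) true ++ [false]) =
        dw δ q (false :: List.replicate m true)) :
    sc (Syn δ) = 2 ^ n - n :=
  sc_syn_max_of_half_shift_general δ n hn hcr ha hb q
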